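/- Let K be a non-real conjugacy class of a finite group G satisfying KK⁻¹ = {1} ∪ K ∪ K⁻¹. Then ⟨K⟩ is an elementary abelian p-group for an odd prime p, and if |⟨K⟩| = pⁿ then p ≡ 3 (mod 4), n is odd, and |K| = (pⁿ − 1)/2. -/

import Mathlib

/-!
Let `T = {1} ∪ K ∪ K⁻¹` and let `m` be the number of ways to write `x = a * b⁻¹` with
`a, b ∈ K`; this number is the same for every element of `K ∪ K⁻¹`. Sorting the pairs of `K × K`
by their quotient `a * b⁻¹ ∈ T` gives `|K|² = |K| + 2 |K| m`, so `|K| = 2m + 1`.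

The heart of the proof is `K * K ⊆ T`. If `u * v ∉ T` for `u, v ∈ K`, the sets
`{c ∈ K | u * c ∈ K}` and `{c ∈ K | v⁻¹ * c ∈ K}` have `m` elements each, are disjoint and miss
`v`, so they partition `K \ {v}`. For `u ≠ v` in `K`, exactly one of `u⁻¹ * v`, `v⁻¹ * u` lies
in `K`. Applied to suitable elements, these exclusive-ors contradict each other.

Hence `T` is the subgroup `⟨K⟩`. Its nontrivial elements all have the order `p` of `x`, so `p` is
prime and `⟨K⟩` is a `p`-group of order `2 |K| + 1 ≡ 3 (mod 4)`; `p ≠ 2` because `x` is not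
conjugate to `x⁻¹`. A nontrivial central element of `⟨K⟩` lies in `K ∪ K⁻¹`, so some element of
`K`, and then every element of `K`, commutes with all of `K`: `⟨K⟩` is abelian.
-/

open scoped Pointwise

open Finset Subgroup

section General

variable {G : Type*} [Group G]

theorem isConj_mul_comm (a b : G) : IsConj (a * b) (b * a) :=
  isConj_iff.2 ⟨b, by group⟩

theorem IsConj.inv {a b : G} (h : IsConj a b) : IsConj a⁻¹ b⁻¹ := by
  obtain ⟨c, rfl⟩ := isConj_iff.1 h
  exact isConj_iff.2 ⟨c, conj_inv.symm⟩

theorem IsConj.orderOf_eq {a b : G} (h : IsConj a b) : orderOf a = orderOf b :=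
  h.elim fun _ hc => hc.orderOf_eq

theorem inv_conjugatesOf (x : G) : (conjugatesOf x)⁻¹ = conjugatesOf x⁻¹ := by
  ext y
  change IsConj x y⁻¹ ↔ IsConj x⁻¹ y
  exact ⟨fun h => by simpa only [inv_inv] using h.inv, fun h => by simpa only [inv_inv] using h.inv⟩

theorem prime_orderOf_of_forall_orderOf_pow_eq {x : G} (hx : IsOfFinOrder x) (hx1 : x ≠ 1)
    (h : ∀ n : ℕ, x ^ n ≠ 1 → orderOf (x ^ n) = orderOf x) : (orderOf x).Prime := by
  obtain ⟨q, hq, hqx⟩ := Nat.exists_prime_and_dvd (mt orderOf_eq_one_iff.1 hx1)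
  have hq_ord : orderOf (x ^ (orderOf x / q)) = q := orderOf_pow_orderOf_div hx.orderOf_pos.ne' hqx
  have hpow1 : x ^ (orderOf x / q) ≠ 1 := fun h1 => hq.ne_one (by rw [← hq_ord, h1, orderOf_one])
  rwa [← h _ hpow1, hq_ord]

theorem IsPGroup.exists_ne_one_forall_commute {p : ℕ} [Fact p.Prime] {H : Subgroup G} [Finite H]
    (hH : IsPGroup p H) (hne : H ≠ ⊥) : ∃ z ∈ H, z ≠ 1 ∧ ∀ h ∈ H, Commute z h := by
  have := (nontrivial_iff_ne_bot H).2 hne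
  have := hH.center_nontrivial
  obtain ⟨z, hz⟩ := exists_ne (1 : center H)
  refine ⟨z, (z : H).2, fun h => hz (Subtype.ext (Subtype.ext h)), fun h hh => ?_⟩
  exact congrArg Subtype.val (mem_center_iff.1 z.2 ⟨h, hh⟩).symm

theorem mod_four_eq_three_and_odd_of_pow_mod_four_eq_three {p n : ℕ} (hp : Odd p)
    (h : p ^ n % 4 = 3) : p % 4 = 3 ∧ Odd n := by
  have hsq : p ^ 2 % 4 = 1 := by
    have : p % 4 = 1 ∨ p % 4 = 3 := by obtain ⟨k, rfl⟩ := hp; omega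
    rcases this with h4 | h4 <;> simp [Nat.pow_mod, h4]
  obtain ⟨j, rfl | rfl⟩ := Nat.even_or_odd' n
  · rw [pow_mul, Nat.pow_mod, hsq, one_pow] at h
    omega
  · rw [pow_succ, pow_mul, Nat.mul_mod, Nat.pow_mod, hsq, one_pow] at h
    exact ⟨by omega, odd_two_mul_add_one j⟩

end General

namespace Finset

variable {G : Type*} [Group G] [DecidableEq G]

theorem sum_convolution (A B : Finset G) : ∑ t ∈ A * B, A.convolution B t = #A * #B := by
  rw [← card_product]
  exact (card_eq_sum_card_fiberwise fun ab hab =>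
    mul_mem_mul (mem_product.1 hab).1 (mem_product.1 hab).2).symm

theorem convolution_inv_self_one (A : Finset G) : A.convolution A⁻¹ 1 = #A := by
  simpa using (card_inter_smul A A 1).symm

theorem convolution_mulEquiv_apply {A B : Finset G} (φ : G ≃* G) (hA : ∀ a, φ a ∈ A ↔ a ∈ A)
    (hB : ∀ b, φ b ∈ B ↔ b ∈ B) (t : G) : A.convolution B (φ t) = A.convolution B t :=
  (card_equiv (φ.toEquiv.prodCongr φ.toEquiv) fun ab => by
    simp [hA, hB, ← map_mul, φ.injective.eq_iff]).symm

theorem inv_mem_mul_inv {s : Finset G} {t : G} (ht : t ∈ s * s⁻¹) : t⁻¹ ∈ s * s⁻¹ := by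
  simpa using inv_mem_inv ht

theorem filter_mul_mem_eq_inter_smul (A B : Finset G) (t : G) :
    {b ∈ A | t * b ∈ B} = A ∩ t⁻¹ • B := by
  ext b
  rw [mem_filter, mem_inter, ← inv_smul_mem_iff, inv_inv, smul_eq_mul]

end Finset

section

variable {G : Type*} [Group G] [DecidableEq G]

structure IsNonRealSelfProductClass (x : G) (K : Finset G) : Prop where
  mem_iff : ∀ a, a ∈ K ↔ IsConj x a
  not_isConj_inv : ¬IsConj x x⁻¹
  mul_inv_eq : K * K⁻¹ = {1} ∪ K ∪ K⁻¹

namespace IsNonRealSelfProductClass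

variable {x : G} {K : Finset G}

theorem mem_self (hK : IsNonRealSelfProductClass x K) : x ∈ K :=
  (hK.mem_iff x).2 (IsConj.refl x)

theorem mem_of_isConj (hK : IsNonRealSelfProductClass x K) {a b : G} (ha : a ∈ K)
    (hab : IsConj a b) : b ∈ K :=
  (hK.mem_iff b).2 (((hK.mem_iff a).1 ha).trans hab)

theorem mem_iff_of_isConj (hK : IsNonRealSelfProductClass x K) {a b : G} (hab : IsConj a b) :
    a ∈ K ↔ b ∈ K :=
  ⟨fun ha => hK.mem_of_isConj ha hab, fun hb => hK.mem_of_isConj hb hab.symm⟩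

theorem isConj_of_mem (hK : IsNonRealSelfProductClass x K) {a b : G} (ha : a ∈ K) (hb : b ∈ K) :
    IsConj a b :=
  ((hK.mem_iff a).1 ha).symm.trans ((hK.mem_iff b).1 hb)

theorem mem_mul_inv_of_isConj (hK : IsNonRealSelfProductClass x K) {s t : G}
    (hs : s ∈ K * K⁻¹) (hst : IsConj s t) : t ∈ K * K⁻¹ := by
  obtain ⟨a, ha, b, hb, rfl⟩ := mem_mul.1 hs
  obtain ⟨g, rfl⟩ := isConj_iff.1 hst
  refine mem_mul.2 ⟨g * a * g⁻¹, hK.mem_of_isConj ha (isConj_iff.2 ⟨g, rfl⟩),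
    g * b * g⁻¹, ?_, by group⟩
  rw [mem_inv', conj_inv]
  exact hK.mem_of_isConj (mem_inv'.1 hb) (isConj_iff.2 ⟨g, rfl⟩)

theorem mem_mul_inv_iff (hK : IsNonRealSelfProductClass x K) {t : G} :
    t ∈ K * K⁻¹ ↔ t = 1 ∨ t ∈ K ∨ t⁻¹ ∈ K := by
  rw [hK.mul_inv_eq]
  simp

theorem mem_mul_inv_of_mem (hK : IsNonRealSelfProductClass x K) {a : G} (ha : a ∈ K) :
    a ∈ K * K⁻¹ :=
  hK.mem_mul_inv_iff.2 (Or.inr (Or.inl ha))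

theorem disjoint_inv (hK : IsNonRealSelfProductClass x K) : Disjoint K K⁻¹ :=
  disjoint_left.2 fun a ha ha' => hK.not_isConj_inv <|
    ((hK.mem_iff _).1 (mem_inv'.1 ha')).trans ((hK.mem_iff a).1 ha).inv.symm

theorem one_notMem (hK : IsNonRealSelfProductClass x K) : (1 : G) ∉ K := fun h1 =>
  disjoint_left.1 hK.disjoint_inv h1 (by simpa using h1)

theorem disjoint_singleton_one (hK : IsNonRealSelfProductClass x K) : Disjoint {1} K :=
  disjoint_singleton_left.2 hK.one_notMem

theorem disjoint_union_inv (hK : IsNonRealSelfProductClass x K) : Disjoint ({1} ∪ K) K⁻¹ :=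
  disjoint_union_left.2 ⟨disjoint_singleton_left.2 (by simpa using hK.one_notMem), hK.disjoint_inv⟩

theorem mem_iff_inv_notMem (hK : IsNonRealSelfProductClass x K) {t : G} (ht : t ∈ K * K⁻¹)
    (ht1 : t ≠ 1) : t ∈ K ↔ t⁻¹ ∉ K := by
  refine ⟨fun h h' => disjoint_left.1 hK.disjoint_inv h (mem_inv'.2 h'), fun h => ?_⟩
  rcases hK.mem_mul_inv_iff.1 ht with h1 | hmem | hmem
  exacts [absurd h1 ht1, hmem, absurd hmem h]

theorem inv_mul_mem_iff (hK : IsNonRealSelfProductClass x K) {u v : G} (hu : u ∈ K) (hv : v ∈ K)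
    (huv : u ≠ v) : u⁻¹ * v ∈ K ↔ v⁻¹ * u ∉ K := by
  have hmem : u⁻¹ * v ∈ K * K⁻¹ :=
    hK.mem_mul_inv_of_isConj (mul_mem_mul hv (inv_mem_inv hu)) (isConj_mul_comm v u⁻¹)
  simpa using hK.mem_iff_inv_notMem hmem (mt inv_mul_eq_one.1 huv)

theorem convolution_eq_of_mem (hK : IsNonRealSelfProductClass x K) {t : G} (ht : t ∈ K) :
    K.convolution K⁻¹ t = K.convolution K⁻¹ x := by
  obtain ⟨g, rfl⟩ := isConj_iff.1 ((hK.mem_iff t).1 ht)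
  have hconj : ∀ a, g * a * g⁻¹ ∈ K ↔ a ∈ K := fun a =>
    ⟨fun h => hK.mem_of_isConj h (isConj_iff.2 ⟨g, rfl⟩).symm,
      fun h => hK.mem_of_isConj h (isConj_iff.2 ⟨g, rfl⟩)⟩
  refine convolution_mulEquiv_apply (MulAut.conj g) hconj (fun b => ?_) x
  rw [mem_inv', mem_inv', MulAut.conj_apply, conj_inv]
  exact hconj b⁻¹

theorem convolution_eq_of_inv_mem (hK : IsNonRealSelfProductClass x K) {t : G} (ht : t⁻¹ ∈ K) :
    K.convolution K⁻¹ t = K.convolution K⁻¹ x := by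
  rw [← hK.convolution_eq_of_mem ht, convolution_inv, inv_inv]

theorem card_eq (hK : IsNonRealSelfProductClass x K) : #K = 2 * K.convolution K⁻¹ x + 1 := by
  set m := K.convolution K⁻¹ x
  have hsq : #K * #K = #K * (2 * m + 1) := by
    calc #K * #K = ∑ t ∈ K * K⁻¹, K.convolution K⁻¹ t := by rw [sum_convolution, card_inv]
      _ = K.convolution K⁻¹ 1 + ∑ t ∈ K, K.convolution K⁻¹ t + ∑ t ∈ K⁻¹, K.convolution K⁻¹ t := by
        rw [hK.mul_inv_eq, sum_union hK.disjoint_union_inv, sum_union hK.disjoint_singleton_one,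
          sum_singleton]
      _ = #K * (2 * m + 1) := by
        rw [convolution_inv_self_one, sum_congr rfl fun t => hK.convolution_eq_of_mem,
          sum_congr rfl fun t ht => hK.convolution_eq_of_inv_mem (mem_inv'.1 ht), sum_const,
          sum_const, card_inv, smul_eq_mul]
        ring
  exact Nat.eq_of_mul_eq_mul_left (card_pos.2 ⟨x, hK.mem_self⟩) hsq

theorem one_lt_card (hK : IsNonRealSelfProductClass x K) : 1 < #K := by
  have : 0 < K.convolution K⁻¹ x := convolution_pos.2 (hK.mem_mul_inv_of_mem hK.mem_self)
  rw [hK.card_eq]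
  omega

theorem mul_mem_iff_inv_mul_notMem (hK : IsNonRealSelfProductClass x K) {u v c : G} (hu : u ∈ K)
    (hv : v ∈ K) (huv : u * v ∉ K * K⁻¹) (hc : c ∈ K) (hcv : c ≠ v) :
    u * c ∈ K ↔ v⁻¹ * c ∉ K := by
  have hA : #{b ∈ K | u * b ∈ K} = K.convolution K⁻¹ x := by
    rw [filter_mul_mem_eq_inter_smul, card_inter_smul, convolution_inv, inv_inv,
      hK.convolution_eq_of_mem hu]
  have hV : #{b ∈ K | v⁻¹ * b ∈ K} = K.convolution K⁻¹ x := by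
    rw [filter_mul_mem_eq_inter_smul, inv_inv, card_inter_smul, hK.convolution_eq_of_mem hv]
  set A := {b ∈ K | u * b ∈ K}
  set V := {b ∈ K | v⁻¹ * b ∈ K}
  -- a common element `b` of `A` and `V` would write `u * v` as `(u * b) * (v⁻¹ * b)⁻¹`
  have hAV : Disjoint A V := disjoint_left.2 fun b hbA hbV => huv <| by
    simpa [mul_assoc] using mul_mem_mul (mem_filter.1 hbA).2 (inv_mem_inv (mem_filter.1 hbV).2)
  have hsub : A ∪ V ⊆ K.erase v := by
    refine subset_erase.2 ⟨union_subset (filter_subset _ _) (filter_subset _ _), ?_⟩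
    rw [mem_union, not_or]
    exact ⟨fun hvA => huv (hK.mem_mul_inv_of_mem (mem_filter.1 hvA).2),
      fun hvV => hK.one_notMem (by simpa using (mem_filter.1 hvV).2)⟩
  have hcard : #(K.erase v) ≤ #(A ∪ V) := by
    rw [card_union_of_disjoint hAV, card_erase_of_mem hv, hK.card_eq, hA, hV]
    omega
  have hcover : c ∈ A ∪ V := by
    rw [eq_of_subset_of_card_le hsub hcard]
    exact mem_erase.2 ⟨hcv, hc⟩
  refine ⟨fun h h' => disjoint_left.1 hAV (mem_filter.2 ⟨hc, h⟩) (mem_filter.2 ⟨hc, h'⟩),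
    fun h => ?_⟩
  rcases mem_union.1 hcover with hcA | hcV
  exacts [(mem_filter.1 hcA).2, absurd (mem_filter.1 hcV).2 h]

theorem mul_mem_mul_inv (hK : IsNonRealSelfProductClass x K) {a b : G} (ha : a ∈ K) (hb : b ∈ K) :
    a * b ∈ K * K⁻¹ := by
  have isConj_mul_self : ∀ {c d}, c ∈ K → d ∈ K → IsConj (c * c) (d * d) := fun hc hd => by
    simpa only [sq] using (hK.isConj_of_mem hc hd).pow 2
  by_contra hab
  -- in both cases `h₁`, `h₂`, `h₃` are exclusive-ors around a triangle, once `h₄` identifies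
  -- two of their vertices
  rcases eq_or_ne a b with rfl | hne
  · obtain ⟨c, hc, hca⟩ := exists_mem_ne hK.one_lt_card a
    have hcc : c * c ∉ K * K⁻¹ := fun hcc =>
      hab (hK.mem_mul_inv_of_isConj hcc (isConj_mul_self hc ha))
    have h₁ := hK.mul_mem_iff_inv_mul_notMem ha ha hab hc hca
    have h₂ := hK.mul_mem_iff_inv_mul_notMem hc hc hcc ha hca.symm
    have h₃ := hK.inv_mul_mem_iff ha hc hca.symm
    have h₄ := hK.mem_iff_of_isConj (isConj_mul_comm a c)
    tauto
  · have hba : b * a ∉ K * K⁻¹ := fun hba =>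
      hab (hK.mem_mul_inv_of_isConj hba (isConj_mul_comm b a))
    have h₁ := hK.mul_mem_iff_inv_mul_notMem ha hb hab ha hne
    have h₂ := hK.mul_mem_iff_inv_mul_notMem hb ha hba hb hne.symm
    have h₃ := hK.inv_mul_mem_iff ha hb hne
    have h₄ := hK.mem_iff_of_isConj (isConj_mul_self ha hb)
    tauto

theorem mul_mem_mul_inv_of_mem (hK : IsNonRealSelfProductClass x K) {s t : G} (hs : s ∈ K)
    (ht : t ∈ K * K⁻¹) : s * t ∈ K * K⁻¹ := by
  rcases hK.mem_mul_inv_iff.1 ht with rfl | ht | ht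
  · simpa using hK.mem_mul_inv_of_mem hs
  · exact hK.mul_mem_mul_inv hs ht
  · simpa using mul_mem_mul hs (inv_mem_inv ht)

theorem inv_mul_mem_mul_inv_of_mem (hK : IsNonRealSelfProductClass x K) {s t : G} (hs : s ∈ K)
    (ht : t ∈ K * K⁻¹) : s⁻¹ * t ∈ K * K⁻¹ := by
  have := hK.mem_mul_inv_of_isConj (hK.mul_mem_mul_inv_of_mem hs (inv_mem_mul_inv ht))
    (isConj_mul_comm s t⁻¹)
  simpa using inv_mem_mul_inv this

theorem coe_closure (hK : IsNonRealSelfProductClass x K) :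
    (closure (K : Set G) : Set G) = ↑(K * K⁻¹) := by
  refine subset_antisymm (fun a ha => ?_) (fun t ht => ?_)
  · induction ha using closure_induction_left with
    | one => exact hK.mem_mul_inv_iff.2 (Or.inl rfl)
    | mul_left s hs t _ ht => exact hK.mul_mem_mul_inv_of_mem hs ht
    | inv_mul_cancel s hs t _ ht => exact hK.inv_mul_mem_mul_inv_of_mem hs ht
  · obtain ⟨a, ha, b, hb, rfl⟩ := mem_mul.1 ht
    exact mul_mem (subset_closure ha) (by simpa using inv_mem (subset_closure (mem_inv'.1 hb)))

theorem mem_closure_iff (hK : IsNonRealSelfProductClass x K) {t : G} :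
    t ∈ closure (K : Set G) ↔ t = 1 ∨ t ∈ K ∨ t⁻¹ ∈ K := by
  rw [← SetLike.mem_coe, hK.coe_closure, mem_coe, hK.mem_mul_inv_iff]

theorem orderOf_eq (hK : IsNonRealSelfProductClass x K) {t : G} (ht : t ∈ closure (K : Set G))
    (ht1 : t ≠ 1) : orderOf t = orderOf x := by
  rcases hK.mem_closure_iff.1 ht with rfl | ht | ht
  · exact absurd rfl ht1
  · exact ((hK.mem_iff t).1 ht).orderOf_eq.symm
  · rw [← orderOf_inv]
    exact ((hK.mem_iff _).1 ht).orderOf_eq.symm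

theorem pow_orderOf_eq_one (hK : IsNonRealSelfProductClass x K) {t : G}
    (ht : t ∈ closure (K : Set G)) : t ^ orderOf x = 1 := by
  rcases eq_or_ne t 1 with rfl | ht1
  · exact one_pow _
  · rw [← hK.orderOf_eq ht ht1]
    exact _root_.pow_orderOf_eq_one t

theorem ne_one (hK : IsNonRealSelfProductClass x K) : x ≠ 1 := fun hx1 =>
  hK.one_notMem (hx1 ▸ hK.mem_self)

theorem prime_orderOf (hK : IsNonRealSelfProductClass x K) : (orderOf x).Prime := by
  have hx : x ∈ closure (K : Set G) := subset_closure hK.mem_self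
  have hfin : IsOfFinOrder x := finite_powers.1 <| (K * K⁻¹).finite_toSet.subset <| by
    rintro _ ⟨n, rfl⟩
    rw [← hK.coe_closure]
    exact pow_mem hx n
  exact prime_orderOf_of_forall_orderOf_pow_eq hfin hK.ne_one fun n hn =>
    hK.orderOf_eq (pow_mem hx n) hn

theorem odd_orderOf (hK : IsNonRealSelfProductClass x K) : Odd (orderOf x) := by
  refine hK.prime_orderOf.odd_of_ne_two fun h2 => hK.not_isConj_inv ?_
  rw [inv_eq_of_mul_eq_one_left (by rw [← sq, ← h2, _root_.pow_orderOf_eq_one])]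

theorem isPGroup (hK : IsNonRealSelfProductClass x K) :
    IsPGroup (orderOf x) (closure (K : Set G)) := fun g =>
  ⟨1, Subtype.ext (by simpa using hK.pow_orderOf_eq_one g.2)⟩

theorem card_closure (hK : IsNonRealSelfProductClass x K) :
    Nat.card (closure (K : Set G)) = 2 * #K + 1 := by
  rw [← SetLike.coe_sort_coe, hK.coe_closure, Nat.card_coe_set_eq, Set.ncard_coe_finset,
    hK.mul_inv_eq, card_union_of_disjoint hK.disjoint_union_inv,
    card_union_of_disjoint hK.disjoint_singleton_one, card_singleton, card_inv]
  ring

theorem exists_mem_forall_commute (hK : IsNonRealSelfProductClass x K) :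
    ∃ w ∈ K, ∀ b ∈ K, Commute w b := by
  have : Finite (closure (K : Set G)) := by
    rw [← SetLike.coe_sort_coe, hK.coe_closure]
    infer_instance
  have := Fact.mk hK.prime_orderOf
  have hne : closure (K : Set G) ≠ ⊥ := fun h =>
    hK.ne_one (by simpa [h] using Subgroup.subset_closure (k := (K : Set G)) hK.mem_self)
  obtain ⟨z, hz, hz1, hzc⟩ := hK.isPGroup.exists_ne_one_forall_commute hne
  rcases hK.mem_closure_iff.1 hz with rfl | hzK | hzK
  · exact absurd rfl hz1
  · exact ⟨z, hzK, fun b hb => hzc b (subset_closure hb)⟩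
  · exact ⟨z⁻¹, hzK, fun b hb => (hzc b (subset_closure hb)).inv_left⟩

theorem commute_of_mem (hK : IsNonRealSelfProductClass x K) {a b : G} (ha : a ∈ K) (hb : b ∈ K) :
    Commute a b := by
  obtain ⟨w, hw, hwc⟩ := hK.exists_mem_forall_commute
  obtain ⟨g, rfl⟩ := isConj_iff.1 (hK.isConj_of_mem hw ha)
  have hb' : g⁻¹ * b * g ∈ K := hK.mem_of_isConj hb (isConj_iff.2 ⟨g⁻¹, by group⟩)
  simpa [mul_assoc] using (hwc _ hb').map (MulAut.conj g)

theorem commute (hK : IsNonRealSelfProductClass x K) {a b : G} (ha : a ∈ closure (K : Set G))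
    (hb : b ∈ closure (K : Set G)) : a * b = b * a :=
  Set.centralizer_centralizer_comm_of_comm (fun _ ha _ hb => (hK.commute_of_mem ha hb).eq)
    a (closure_le_centralizer_centralizer _ ha) b (closure_le_centralizer_centralizer _ hb)

theorem of_coe_eq_conjugatesOf (hKx : (K : Set G) = conjugatesOf x)
    (hnonreal : conjugatesOf x ≠ (conjugatesOf x)⁻¹)
    (h : conjugatesOf x * (conjugatesOf x)⁻¹ = {1} ∪ conjugatesOf x ∪ (conjugatesOf x)⁻¹) :
    IsNonRealSelfProductClass x K where
  mem_iff a := by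
    rw [← mem_coe, hKx]
    rfl
  not_isConj_inv hx := hnonreal (by rw [inv_conjugatesOf, isConj_iff_conjugatesOf_eq.1 hx])
  mul_inv_eq := by
    rw [← coe_inj]
    push_cast
    rw [hKx]
    exact h

end IsNonRealSelfProductClass

end

theorem non_real_class_self_product
    {G : Type*} [Group G] [Finite G] (x : G)
    (hnonreal : conjugatesOf x ≠ (conjugatesOf x)⁻¹)
    (h : conjugatesOf x * (conjugatesOf x)⁻¹ =
      {1} ∪ conjugatesOf x ∪ (conjugatesOf x)⁻¹) :
    ∃ p n : ℕ, p.Prime ∧ Odd p ∧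
      (∀ a ∈ Subgroup.closure (conjugatesOf x), ∀ b ∈ Subgroup.closure (conjugatesOf x),
        a * b = b * a) ∧
      (∀ a ∈ Subgroup.closure (conjugatesOf x), a ^ p = 1) ∧
      Nat.card (Subgroup.closure (conjugatesOf x)) = p ^ n ∧
      p % 4 = 3 ∧ Odd n ∧
      2 * (conjugatesOf x).ncard + 1 = p ^ n := by
  classical
  obtain ⟨K, hKx⟩ : ∃ K : Finset G, (K : Set G) = conjugatesOf x :=
    ⟨_, (Set.toFinite _).coe_toFinset⟩
  have hK := IsNonRealSelfProductClass.of_coe_eq_conjugatesOf hKx hnonreal h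
  have := Fact.mk hK.prime_orderOf
  obtain ⟨n, hn⟩ := IsPGroup.iff_card.1 hK.isPGroup
  have hKn : 2 * #K + 1 = orderOf x ^ n := hK.card_closure ▸ hn
  obtain ⟨hp4, hn_odd⟩ := mod_four_eq_three_and_odd_of_pow_mod_four_eq_three hK.odd_orderOf
    (by rw [← hKn, hK.card_eq]; omega)
  rw [← hKx, Set.ncard_coe_finset]
  exact ⟨orderOf x, n, hK.prime_orderOf, hK.odd_orderOf, fun a ha b hb => hK.commute ha hb,
    fun a ha => hK.pow_orderOf_eq_one ha, hn, hp4, hn_odd, hKn⟩
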